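/- Let T ≥ 2 and define f̄_m(x,z) = -Ψ(1)Φ(x₁) + Σ_{i=2}^{T}[Ψ(-z_i)Φ(-x_i) - Ψ(z_i)Φ(x_i)] + 6·Σ_{i=1}^{T-1}(x_i - (1/2)·z_{i+1})² for x ∈ ℝ^T and z = (z₂,…,z_T) ∈ ℝ^{T-1}. Then f̄_m(0,0) - inf_{x ∈ ℝ^T, z ∈ ℝ^{T-1}} f̄_m(x,z) ≤ 12·T; in particular f̄_m(0,0) ≤ 0 and f̄_m(x,z) ≥ -12·T for all (x,z). -/
import Mathlib


/-- `Ψ(x) = 0` for `x ≤ 1/2`, `exp(1 - 1/(2x-1)²)` for `x > 1/2`. -/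
noncomputable def Psi (x : ℝ) : ℝ :=
  if x ≤ 1 / 2 then 0 else Real.exp (1 - 1 / (2 * x - 1) ^ 2)

/-- `Φ(x) = √e · ∫_{-∞}^x e^{-t²/2} dt`. -/
noncomputable def Phi (x : ℝ) : ℝ :=
  Real.sqrt (Real.exp 1) * ∫ t in Set.Iic x, Real.exp (-t ^ 2 / 2)

/-- `f̄_m(x, z)` on `ℝ^T × ℝ^{T-1}`.
Coordinate `Sum.inl j` is the math variable `x_{j+1}`; `Sum.inr j` is `z_{j+2}`. -/
noncomputable def fmE (T : ℕ) (hT : 2 ≤ T)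
    (w : EuclideanSpace ℝ (Fin T ⊕ Fin (T - 1))) : ℝ :=
  -Psi 1 * Phi (w (Sum.inl ⟨0, by omega⟩))
    + ∑ j : Fin (T - 1),
        (Psi (-w (Sum.inr j)) * Phi (-w (Sum.inl ⟨(j : ℕ) + 1, by have := j.isLt; omega⟩))
          - Psi (w (Sum.inr j)) * Phi (w (Sum.inl ⟨(j : ℕ) + 1, by have := j.isLt; omega⟩)))
    + 6 * ∑ j : Fin (T - 1),
        (w (Sum.inl ⟨(j : ℕ), by have := j.isLt; omega⟩) - (1 / 2) * w (Sum.inr j)) ^ 2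

lemma Psi_nonneg (x : ℝ) : 0 ≤ Psi x := by
  unfold Psi; split
  · exact le_refl 0
  · exact (Real.exp_pos _).le

lemma Psi_le_e (x : ℝ) : Psi x ≤ Real.exp 1 := by
  unfold Psi; split
  · exact (Real.exp_pos _).le
  · apply Real.exp_le_exp.mpr
    have : (0:ℝ) < (2 * x - 1) ^ 2 := by
      have hx : (1:ℝ)/2 < x := lt_of_not_ge (by assumption)
      have : (0:ℝ) < 2 * x - 1 := by linarith
      exact pow_pos this 2
    have := le_of_lt (div_pos one_pos this)
    linarith

lemma Phi_nonneg (x : ℝ) : 0 ≤ Phi x := by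
  unfold Phi
  have h : 0 ≤ (∫ t in Set.Iic x, Real.exp (-t ^ 2 / 2)) := by positivity
  exact mul_nonneg (Real.sqrt_nonneg _) h

lemma Phi_le (x : ℝ) : Phi x ≤ Real.sqrt (Real.exp 1) * Real.sqrt (2 * Real.pi) := by
  unfold Phi
  have h : (∫ t in Set.Iic x, Real.exp (-t ^ 2 / 2)) ≤ Real.sqrt (2 * Real.pi) := by
    have hint : MeasureTheory.Integrable (fun t : ℝ => Real.exp (-(1/2) * t ^ 2)) :=
      integrable_exp_neg_mul_sq (by norm_num)
    calc (∫ t in Set.Iic x, Real.exp (-t ^ 2 / 2)) ≤ ∫ t : ℝ, Real.exp (-t ^ 2 / 2) := by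
          apply MeasureTheory.setIntegral_le_integral
          · have := hint
            simpa [neg_mul, neg_div, div_eq_mul_inv, mul_comm] using this
          · filter_upwards with t using (Real.exp_pos _).le
      _ = Real.sqrt (Real.pi / (1/2)) := by
          rw [← integral_gaussian]
          congr 1 with t; ring_nf
      _ = Real.sqrt (2 * Real.pi) := by norm_num [mul_comm]
  have h0 : (0:ℝ) ≤ Real.sqrt (Real.exp 1) := Real.sqrt_nonneg _
  exact mul_le_mul_of_nonneg_left h h0

lemma PsiPhi_le (a b : ℝ) : Psi a * Phi b ≤ 12 := by
  have h1 : Psi a * Phi b ≤ Real.exp 1 * (Real.sqrt (Real.exp 1) * Real.sqrt (2 * Real.pi)) := by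
    apply mul_le_mul (Psi_le_e a) (Phi_le b) (Phi_nonneg b) (Real.exp_pos _).le
  refine h1.trans ?_
  rw [← Real.sqrt_mul (Real.exp_pos 1).le]
  have he : Real.exp 1 < 2.7182818286 := Real.exp_one_lt_d9
  have hp : Real.pi < 3.15 := Real.pi_lt_d2
  have he0 : 0 < Real.exp 1 := Real.exp_pos 1
  have hp0 : 0 < Real.pi := Real.pi_pos
  have hs : Real.sqrt (Real.exp 1 * (2 * Real.pi)) ≤ 4.25 := by
    rw [show (4.25:ℝ) = Real.sqrt (4.25^2) by rw [Real.sqrt_sq]; norm_num]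
    apply Real.sqrt_le_sqrt
    nlinarith
  have hsnn : 0 ≤ Real.sqrt (Real.exp 1 * (2 * Real.pi)) := Real.sqrt_nonneg _
  nlinarith

lemma PsiPhi_nonneg (a b : ℝ) : 0 ≤ Psi a * Phi b :=
  mul_nonneg (Psi_nonneg a) (Phi_nonneg b)

/-- `f̄_m(0,0) - inf f̄_m ≤ 12 T`; in particular `f̄_m(0,0) ≤ 0`
and `f̄_m(x,z) ≥ -12 T` for all `(x, z)`. -/
theorem stmt_9 (T : ℕ) (hT : 2 ≤ T) :
    fmE T hT 0 ≤ 0 ∧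
    (∀ w : EuclideanSpace ℝ (Fin T ⊕ Fin (T - 1)), -(12 * (T : ℝ)) ≤ fmE T hT w) ∧
    ∀ w : EuclideanSpace ℝ (Fin T ⊕ Fin (T - 1)), fmE T hT 0 - fmE T hT w ≤ 12 * (T : ℝ) := by
  have h0 : fmE T hT 0 ≤ 0 := by
    have hz : ∀ i : Fin T ⊕ Fin (T - 1), (0 : EuclideanSpace ℝ (Fin T ⊕ Fin (T - 1))) i = 0 := by
      intro i; rfl
    have hP0 : Psi 0 = 0 := by unfold Psi; norm_num
    simp only [fmE, hz, neg_zero, hP0, zero_mul, mul_zero, sub_zero, sub_self,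
      Finset.sum_const_zero, add_zero, ne_eq, OfNat.ofNat_ne_zero, not_false_eq_true, zero_pow]
    nlinarith [mul_nonneg (Psi_nonneg 1) (Phi_nonneg 0)]
  have hlow : ∀ w : EuclideanSpace ℝ (Fin T ⊕ Fin (T - 1)), -(12 * (T : ℝ)) ≤ fmE T hT w := by
    intro w
    unfold fmE
    have h1 : -Psi 1 * Phi (w (Sum.inl ⟨0, by omega⟩)) ≥ -12 := by
      have := PsiPhi_le 1 (w (Sum.inl ⟨0, by omega⟩))
      linarith
    have h2 : ∀ j : Fin (T-1),
        (Psi (-w (Sum.inr j)) * Phi (-w (Sum.inl ⟨(j : ℕ) + 1, by have := j.isLt; omega⟩))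
          - Psi (w (Sum.inr j)) * Phi (w (Sum.inl ⟨(j : ℕ) + 1, by have := j.isLt; omega⟩)))
        ≥ -12 := by
      intro j
      have ha := PsiPhi_nonneg (-w (Sum.inr j)) (-w (Sum.inl ⟨(j : ℕ) + 1, by have := j.isLt; omega⟩))
      have hb := PsiPhi_le (w (Sum.inr j)) (w (Sum.inl ⟨(j : ℕ) + 1, by have := j.isLt; omega⟩))
      linarith
    have hsum : ∑ j : Fin (T - 1),
        (Psi (-w (Sum.inr j)) * Phi (-w (Sum.inl ⟨(j : ℕ) + 1, by have := j.isLt; omega⟩))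
          - Psi (w (Sum.inr j)) * Phi (w (Sum.inl ⟨(j : ℕ) + 1, by have := j.isLt; omega⟩)))
        ≥ ∑ _j : Fin (T - 1), (-12 : ℝ) :=
      Finset.sum_le_sum (fun j _ => h2 j)
    have hcard : ∑ _j : Fin (T - 1), (-12 : ℝ) = -(12 * ((T:ℝ) - 1)) := by
      rw [Finset.sum_const, Finset.card_univ, Fintype.card_fin, nsmul_eq_mul]
      have h1T : (1:ℕ) ≤ T := by omega
      rw [Nat.cast_sub h1T]; push_cast; ring
    have h3 : 0 ≤ 6 * ∑ j : Fin (T - 1),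
        (w (Sum.inl ⟨(j : ℕ), by have := j.isLt; omega⟩) - (1 / 2) * w (Sum.inr j)) ^ 2 := by
      positivity
    rw [hcard] at hsum
    linarith
  refine ⟨h0, hlow, fun w => ?_⟩
  have := hlow w
  linarith
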